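/- arXiv:1706.03082 — 2 statements merged into one kernel-verified Lean document; each statement's English description precedes it below -/
import Mathlib

section
/- (Tangent space to the manifold of idempotents.) (a) If P : ℝ → B(H) is a curve with P(t)² = P(t) for all t, differentiable at t = 0 in operator norm with derivative B, then P(0) B P(0) = 0 and (1 − P(0)) B (1 − P(0)) = 0. (b) Conversely, if P ∈ B(H) satisfies P² = P and B ∈ B(H) satisfies P B P = 0 and (1 − P) B (1 − P) = 0, then the curve P_t := exp(t(BP − PB)) ∘ P ∘ exp(−t(BP − PB)) satisfies P_t² = P_t for all t ∈ ℝ, P_0 = P, and is differentiable at t = 0 with derivative B. -/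
/-!
Differentiating `P t * P t = P t` at `0` gives `B = B P + P B`, and for an idempotent `P` this
single relation is equivalent to the two conditions `P B P = 0` and `(1 - P) B (1 - P) = 0`.
Conversely, conjugating `P` by the one-parameter group `exp (t A)` keeps it idempotent and
moves it with velocity `[A, P]`; for `A = [B, P]` that velocity is
`[[B, P], P] = B P + P B - 2 P B P`, which is `B` again.
-/

open NormedSpace

namespace IsIdempotentElem

theorem conj_of_mul_eq_one {M : Type*} [Monoid M] {p u v : M} (hp : IsIdempotentElem p)
    (hvu : v * u = 1) : IsIdempotentElem (u * p * v) := by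
  rw [IsIdempotentElem]
  calc u * p * v * (u * p * v) = u * (p * (v * u) * p) * v := by simp only [mul_assoc]
    _ = u * p * v := by rw [hvu, mul_one, hp.eq, mul_assoc]

variable {R : Type*} [Ring R] {p b : R}

theorem mul_add_mul_eq_self_iff (hp : IsIdempotentElem p) :
    b * p + p * b = b ↔ p * b * p = 0 ∧ (1 - p) * b * (1 - p) = 0 := by
  have hpbp : p * (b * p + p * b) * p = p * b * p + p * b * p := by
    rw [mul_add, add_mul, ← mul_assoc p p, hp.eq, mul_assoc, mul_assoc, hp.eq, ← mul_assoc]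
  have hcompl : (1 - p) * b * (1 - p) = b - (b * p + p * b) + p * b * p := by noncomm_ring
  constructor
  · intro hb
    have hzero : p * b * p = 0 := by
      rw [hb] at hpbp
      exact left_eq_add.mp hpbp
    rw [hcompl, hb, sub_self, zero_add]
    exact ⟨hzero, hzero⟩
  · rintro ⟨hzero, hcompl_zero⟩
    rw [hcompl, hzero, add_zero, sub_eq_zero] at hcompl_zero
    exact hcompl_zero.symm

theorem commutator_commutator_eq_self (hp : IsIdempotentElem p) (hb : b * p + p * b = b) :
    (b * p - p * b) * p - p * (b * p - p * b) = b := by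
  have hzero : p * b * p = 0 := (hp.mul_add_mul_eq_self_iff.mp hb).1
  calc (b * p - p * b) * p - p * (b * p - p * b)
      = b * (p * p) + (p * p) * b - 2 * (p * b * p) := by noncomm_ring
    _ = b := by rw [hp.eq, hzero, mul_zero, sub_zero, hb]

end IsIdempotentElem

theorem HasDerivAt.mul_add_mul_eq_self_of_isIdempotentElem {𝕜 A : Type*}
    [NontriviallyNormedField 𝕜] [NormedRing A] [NormedAlgebra 𝕜 A] {P : 𝕜 → A} {b : A} {t : 𝕜}
    (hP : ∀ s, IsIdempotentElem (P s)) (hb : HasDerivAt P b t) : b * P t + P t * b = b := by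
  have hsq : HasDerivAt (fun s => P s * P s) (b * P t + P t * b) t := hb.mul hb
  simp only [fun s => (hP s).eq] at hsq
  exact hsq.unique hb

theorem isIdempotentElem_exp_mul_mul_exp_neg (𝕂 : Type*) {A : Type*} [RCLike 𝕂] [NormedRing A]
    [NormedAlgebra 𝕂 A] [CompleteSpace A] {p : A} (hp : IsIdempotentElem p) (x : A) :
    IsIdempotentElem (exp x * p * exp (-x)) := by
  let : NormedAlgebra ℚ A := NormedAlgebra.restrictScalars ℚ 𝕂 A
  refine hp.conj_of_mul_eq_one ?_
  rw [← exp_add_of_commute (Commute.refl x).neg_left, neg_add_cancel, exp_zero]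

theorem hasDerivAt_exp_smul_mul_mul_exp_neg_smul {𝕂 A : Type*} [RCLike 𝕂] [NormedRing A]
    [NormedAlgebra 𝕂 A] [CompleteSpace A] (a p : A) (t : 𝕂) :
    HasDerivAt (fun s : 𝕂 => exp (s • a) * p * exp (-(s • a)))
      (exp (t • a) * (a * p - p * a) * exp (-(t • a))) t := by
  have hleft := (hasDerivAt_exp_smul_const a t).mul_const p
  have hright := hasDerivAt_exp_smul_const' (-a) t
  simp only [smul_neg] at hright
  exact (hleft.mul hright).congr_deriv (by noncomm_ring)

/-- Tangent space to the manifold of idempotents in `B(H)`.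
(a) If `P : ℝ → B(H)` is a curve of idempotents, differentiable at `t = 0` in operator norm
with derivative `B`, then `P(0) B P(0) = 0` and `(1 − P(0)) B (1 − P(0)) = 0`.
(b) Conversely, if `P² = P`, `P B P = 0` and `(1 − P) B (1 − P) = 0`, then the curve
`P_t := exp(t(BP − PB)) P exp(−t(BP − PB))` consists of idempotents, starts at `P`, and is
differentiable at `t = 0` with derivative `B`. -/
theorem stmt13 {H : Type*} [NormedAddCommGroup H] [InnerProductSpace ℂ H] [CompleteSpace H] :
    (∀ (P : ℝ → (H →L[ℂ] H)) (B : H →L[ℂ] H),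
      (∀ t : ℝ, P t * P t = P t) → HasDerivAt P B 0 →
        P 0 * B * P 0 = 0 ∧ (1 - P 0) * B * (1 - P 0) = 0) ∧
    (∀ P B : H →L[ℂ] H, P * P = P → P * B * P = 0 → (1 - P) * B * (1 - P) = 0 →
      (∀ t : ℝ, (NormedSpace.exp (t • (B * P - P * B)) * P *
            NormedSpace.exp (-(t • (B * P - P * B)))) *
          (NormedSpace.exp (t • (B * P - P * B)) * P *
            NormedSpace.exp (-(t • (B * P - P * B))))
        = NormedSpace.exp (t • (B * P - P * B)) * P *
            NormedSpace.exp (-(t • (B * P - P * B)))) ∧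
      (NormedSpace.exp ((0 : ℝ) • (B * P - P * B)) * P *
          NormedSpace.exp (-((0 : ℝ) • (B * P - P * B))) = P) ∧
      HasDerivAt (fun t : ℝ => NormedSpace.exp (t • (B * P - P * B)) * P *
          NormedSpace.exp (-(t • (B * P - P * B)))) B 0) := by
  refine ⟨fun P B hP hderiv => ?_, fun P B hP hPBP hcompl => ?_⟩
  · exact (IsIdempotentElem.mul_add_mul_eq_self_iff (hP 0)).mp
      (hderiv.mul_add_mul_eq_self_of_isIdempotentElem hP)
  · have hB : B * P + P * B = B :=
      (IsIdempotentElem.mul_add_mul_eq_self_iff hP).mpr ⟨hPBP, hcompl⟩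
    refine ⟨fun t => isIdempotentElem_exp_mul_mul_exp_neg ℂ hP _, by simp, ?_⟩
    simpa [IsIdempotentElem.commutator_commutator_eq_self hP hB] using
      hasDerivAt_exp_smul_mul_mul_exp_neg_smul (𝕂 := ℝ) (B * P - P * B) P 0
end

section
/- Let α : ℝ³ × ℝ³ → ℂ be measurable and such that for almost every y ∈ ℝ³ the function x ↦ α(x, y) is an H¹ function. Then ∬ |V(x − y)| |α(x, y)|² dx dy ≤ C (∬ |α(x, y)|² dx dy)^{1/2} (∬ |α(x, y)|² dx dy + ∬ ‖∇ₓα(x, y)‖² dx dy)^{1/2}. (This is the estimate |tr α* Π_V(α)| ≤ C ‖α‖_{S₂} ‖Mα‖_{S₂} used to bound the pairing term of the energy.) -/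
open MeasureTheory
open scoped ENNReal

/-- A function `f : ℝ³ → ℂ` is an `H¹` function: it is differentiable, square-integrable,
and its (Fréchet) derivative is square-integrable (in operator norm). -/
def IsH1 (f : EuclideanSpace ℝ (Fin 3) → ℂ) : Prop :=
  Differentiable ℝ f ∧
    (∫⁻ x, (‖f x‖₊ : ℝ≥0∞) ^ 2) < ⊤ ∧
    (∫⁻ x, (‖fderiv ℝ f x‖₊ : ℝ≥0∞) ^ 2) < ⊤

/-!
Write `|V(x - y)| |α|² = |α| · (|V(x - y)| |α|)` and apply Cauchy–Schwarz on `ℝ³ × ℝ³`.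
The second factor is `∫ dy ∫ |V(x - y)|² |α(x, y)|² dx`; for fixed `y` the inner integral is,
after translating `x` by `y`, the left side of the form bound for the `H¹` function
`x ↦ α(x + y, y)`, so it is at most `C² (∫ |α(·, y)|² + ∫ ‖∇ₓα(·, y)‖²)`.
-/

local notation "ℝ³" => EuclideanSpace ℝ (Fin 3)

/-- The form bound `V² ≤ C²(1 − Δ)` on `H¹`. -/
def IsFormBounded (V : ℝ³ → ℝ) (C : ℝ) : Prop :=
  ∀ f : ℝ³ → ℂ, IsH1 f →
    (∫⁻ x, (‖V x • f x‖₊ : ℝ≥0∞) ^ 2) ≤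
      (ENNReal.ofReal C) ^ 2 *
        ((∫⁻ x, (‖f x‖₊ : ℝ≥0∞) ^ 2) + ∫⁻ x, (‖fderiv ℝ f x‖₊ : ℝ≥0∞) ^ 2)

namespace ENNReal

lemma rpow_half_sq (z : ℝ≥0∞) : (z ^ 2) ^ (1 / 2 : ℝ) = z := by
  rw [← rpow_two, ← rpow_mul]; norm_num

lemma lintegral_mul_sq_le {X : Type*} [MeasurableSpace X] (μ : Measure X) {w a : X → ℝ≥0∞}
    (hw : AEMeasurable w μ) (ha : AEMeasurable a μ) :
    ∫⁻ x, w x * a x ^ 2 ∂μ ≤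
      (∫⁻ x, a x ^ 2 ∂μ) ^ (1 / 2 : ℝ) * (∫⁻ x, w x ^ 2 * a x ^ 2 ∂μ) ^ (1 / 2 : ℝ) := by
  have h := lintegral_mul_le_Lp_mul_Lq μ Real.HolderConjugate.two_two ha (hw.mul ha)
  simp only [Pi.mul_apply, rpow_two, mul_pow] at h
  calc ∫⁻ x, w x * a x ^ 2 ∂μ = ∫⁻ x, a x * (w x * a x) ∂μ := by
        congr 1; funext x; ring
    _ ≤ _ := h

end ENNReal

lemma IsH1.comp_add_right {f : ℝ³ → ℂ} (hf : IsH1 f) (y : ℝ³) : IsH1 fun x => f (x + y) := by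
  obtain ⟨hdiff, hf2, hdf2⟩ := hf
  refine ⟨hdiff.comp (differentiable_id.add_const y), ?_, ?_⟩
  · rwa [lintegral_add_right_eq_self (fun x => (‖f x‖₊ : ℝ≥0∞) ^ 2) y]
  · simp_rw [fderiv_comp_add_right]
    rwa [lintegral_add_right_eq_self (fun x => (‖fderiv ℝ f x‖₊ : ℝ≥0∞) ^ 2) y]

lemma lintegral_translate_potential_sq_le {V : ℝ³ → ℝ} {C : ℝ}
    (hbound : IsFormBounded V C)
    {g : ℝ³ → ℂ} (hg : IsH1 g) (y : ℝ³) :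
    ∫⁻ x, (‖V (x - y)‖₊ : ℝ≥0∞) ^ 2 * (‖g x‖₊ : ℝ≥0∞) ^ 2 ≤
      (ENNReal.ofReal C) ^ 2 *
        ((∫⁻ x, (‖g x‖₊ : ℝ≥0∞) ^ 2) + ∫⁻ x, (‖fderiv ℝ g x‖₊ : ℝ≥0∞) ^ 2) := by
  have h := hbound _ (hg.comp_add_right y)
  simp_rw [fderiv_comp_add_right, nnnorm_smul, ENNReal.coe_mul, mul_pow] at h
  rw [lintegral_add_right_eq_self (fun x => (‖g x‖₊ : ℝ≥0∞) ^ 2) y,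
    lintegral_add_right_eq_self (fun x => (‖fderiv ℝ g x‖₊ : ℝ≥0∞) ^ 2) y] at h
  rw [← lintegral_add_right_eq_self _ y]
  simpa only [add_sub_cancel_right] using h

lemma lintegral_lintegral_potential_sq_le {V : ℝ³ → ℝ} {C : ℝ}
    (hbound : IsFormBounded V C)
    {α : ℝ³ × ℝ³ → ℂ} (hα : Measurable α) (hαH1 : ∀ᵐ y : ℝ³, IsH1 fun x => α (x, y)) :
    ∫⁻ y, ∫⁻ x, (‖V (x - y)‖₊ : ℝ≥0∞) ^ 2 * (‖α (x, y)‖₊ : ℝ≥0∞) ^ 2 ≤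
      (ENNReal.ofReal C) ^ 2 *
        ((∫⁻ y, ∫⁻ x, (‖α (x, y)‖₊ : ℝ≥0∞) ^ 2) +
          ∫⁻ y, ∫⁻ x, (‖fderiv ℝ (fun x => α (x, y)) x‖₊ : ℝ≥0∞) ^ 2) := by
  have hA : Measurable fun y => ∫⁻ x, (‖α (x, y)‖₊ : ℝ≥0∞) ^ 2 :=
    (hα.nnnorm.coe_nnreal_ennreal.pow_const 2).lintegral_prod_left'
  calc _ ≤ ∫⁻ y, (ENNReal.ofReal C) ^ 2 *
          ((∫⁻ x, (‖α (x, y)‖₊ : ℝ≥0∞) ^ 2) +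
            ∫⁻ x, (‖fderiv ℝ (fun x => α (x, y)) x‖₊ : ℝ≥0∞) ^ 2) :=
        lintegral_mono_ae <| hαH1.mono fun y hy => lintegral_translate_potential_sq_le hbound hy y
    _ = _ := by
        rw [lintegral_const_mul' _ _ (by finiteness), lintegral_add_left' hA.aemeasurable]

theorem stmt16_general (V : EuclideanSpace ℝ (Fin 3) → ℝ) (hV : Measurable V)
    (C : ℝ)
    (hbound : ∀ f : EuclideanSpace ℝ (Fin 3) → ℂ, IsH1 f →
      (∫⁻ x, (‖V x • f x‖₊ : ℝ≥0∞) ^ 2) ≤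
        (ENNReal.ofReal C) ^ 2 *
          ((∫⁻ x, (‖f x‖₊ : ℝ≥0∞) ^ 2) + ∫⁻ x, (‖fderiv ℝ f x‖₊ : ℝ≥0∞) ^ 2))
    (α : EuclideanSpace ℝ (Fin 3) × EuclideanSpace ℝ (Fin 3) → ℂ) (hα : Measurable α)
    (hαH1 : ∀ᵐ y : EuclideanSpace ℝ (Fin 3), IsH1 fun x => α (x, y)) :
    (∫⁻ y, ∫⁻ x, (‖V (x - y)‖₊ : ℝ≥0∞) * (‖α (x, y)‖₊ : ℝ≥0∞) ^ 2) ≤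
      ENNReal.ofReal C * (∫⁻ y, ∫⁻ x, (‖α (x, y)‖₊ : ℝ≥0∞) ^ 2) ^ (1 / 2 : ℝ) *
        ((∫⁻ y, ∫⁻ x, (‖α (x, y)‖₊ : ℝ≥0∞) ^ 2) +
          ∫⁻ y, ∫⁻ x, (‖fderiv ℝ (fun x => α (x, y)) x‖₊ : ℝ≥0∞) ^ 2) ^ (1 / 2 : ℝ) := by
  have ha : Measurable fun p => (‖α p‖₊ : ℝ≥0∞) := hα.nnnorm.coe_nnreal_ennreal
  have hw : Measurable fun p : ℝ³ × ℝ³ => (‖V (p.1 - p.2)‖₊ : ℝ≥0∞) :=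
    (hV.comp (measurable_fst.sub measurable_snd)).nnnorm.coe_nnreal_ennreal
  calc _ = ∫⁻ p, (‖V (p.1 - p.2)‖₊ : ℝ≥0∞) * (‖α p‖₊ : ℝ≥0∞) ^ 2 ∂volume.prod volume :=
        (lintegral_prod_symm' _ (hw.mul (ha.pow_const 2))).symm
    _ ≤ (∫⁻ p, (‖α p‖₊ : ℝ≥0∞) ^ 2 ∂volume.prod volume) ^ (1 / 2 : ℝ) *
          (∫⁻ p, (‖V (p.1 - p.2)‖₊ : ℝ≥0∞) ^ 2 * (‖α p‖₊ : ℝ≥0∞) ^ 2 ∂volume.prod volume) ^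
            (1 / 2 : ℝ) :=
        ENNReal.lintegral_mul_sq_le _ hw.aemeasurable ha.aemeasurable
    _ = (∫⁻ y, ∫⁻ x, (‖α (x, y)‖₊ : ℝ≥0∞) ^ 2) ^ (1 / 2 : ℝ) *
          (∫⁻ y, ∫⁻ x, (‖V (x - y)‖₊ : ℝ≥0∞) ^ 2 * (‖α (x, y)‖₊ : ℝ≥0∞) ^ 2) ^ (1 / 2 : ℝ) := by
        rw [lintegral_prod_symm' _ (ha.pow_const 2),
          lintegral_prod_symm'
            (fun p : ℝ³ × ℝ³ => (‖V (p.1 - p.2)‖₊ : ℝ≥0∞) ^ 2 * (‖α p‖₊ : ℝ≥0∞) ^ 2)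
            ((hw.pow_const 2).mul (ha.pow_const 2))]
    _ ≤ _ := by
        grw [lintegral_lintegral_potential_sq_le hbound hα hαH1,
          ENNReal.mul_rpow_of_nonneg _ _ (by norm_num), ENNReal.rpow_half_sq]
        exact le_of_eq (by ring)

/-- Assume the form bound `V² ≤ C²(1 − Δ)`.  Let `α : ℝ³ × ℝ³ → ℂ` be
measurable and such that for a.e. `y` the function `x ↦ α(x, y)` is `H¹`.  Then
`∬ |V(x − y)| |α(x, y)|² dx dy ≤ C (∬ |α|²)^{1/2} (∬ |α|² + ∬ ‖∇ₓα‖²)^{1/2}`, i.e. the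
estimate `|tr α* Π_V(α)| ≤ C ‖α‖_{S₂} ‖Mα‖_{S₂}`. -/
theorem stmt16 (V : EuclideanSpace ℝ (Fin 3) → ℝ) (hV : Measurable V)
    (C : ℝ) (hC : 0 ≤ C)
    (hbound : ∀ f : EuclideanSpace ℝ (Fin 3) → ℂ, IsH1 f →
      (∫⁻ x, (‖V x • f x‖₊ : ℝ≥0∞) ^ 2) ≤
        (ENNReal.ofReal C) ^ 2 *
          ((∫⁻ x, (‖f x‖₊ : ℝ≥0∞) ^ 2) + ∫⁻ x, (‖fderiv ℝ f x‖₊ : ℝ≥0∞) ^ 2))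
    (α : EuclideanSpace ℝ (Fin 3) × EuclideanSpace ℝ (Fin 3) → ℂ) (hα : Measurable α)
    (hαH1 : ∀ᵐ y : EuclideanSpace ℝ (Fin 3), IsH1 fun x => α (x, y)) :
    (∫⁻ y, ∫⁻ x, (‖V (x - y)‖₊ : ℝ≥0∞) * (‖α (x, y)‖₊ : ℝ≥0∞) ^ 2) ≤
      ENNReal.ofReal C * (∫⁻ y, ∫⁻ x, (‖α (x, y)‖₊ : ℝ≥0∞) ^ 2) ^ (1 / 2 : ℝ) *
        ((∫⁻ y, ∫⁻ x, (‖α (x, y)‖₊ : ℝ≥0∞) ^ 2) +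
          ∫⁻ y, ∫⁻ x, (‖fderiv ℝ (fun x => α (x, y)) x‖₊ : ℝ≥0∞) ^ 2) ^ (1 / 2 : ℝ) :=
  stmt16_general V hV C hbound α hα hαH1
end
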